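/- Any probability density ρ on ℝ satisfying the fixed-point integral equations ρ(d) = e^{d}∫_{−∞}^{d} ρ(δ)dδ + e^{2d}∫_{d}^{∞} ρ(δ)e^{−δ}dδ for d < 0, and ρ(d) = e^{−2d}∫_{−∞}^{d} ρ(δ)e^{δ}dδ + e^{−d}∫_{d}^{∞} ρ(δ)dδ for d ≥ 0, which is twice continuously differentiable on (−∞,0), satisfies the ODE ρ''(d) = 3ρ'(d) − (2 + e^{d})ρ(d) for all d < 0. -/

import Mathlib

/-!
For `d < 0` write `ρ = e^d F + e^{2d} G` with `F d = ∫_{δ<d} ρ` and `G d = ∫_{δ>d} ρ e^{-δ}`, so that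
`F' = ρ` and `G' = -ρ e^{-d}`. In the derivative of `a e^d F + b e^{2d} G` the terms coming from
`F'` and `G'` combine to `(a - b) e^d ρ`; hence `ρ' = e^d F + 2 e^{2d} G` and
`ρ'' = e^d F + 4 e^{2d} G - e^d ρ`, and `3ρ' - 2ρ = e^d F + 4 e^{2d} G` eliminates `F` and `G`.
-/

open Real MeasureTheory Set

section SetIntegralDeriv

variable {E : Type*} [NormedAddCommGroup E] [NormedSpace ℝ E] [CompleteSpace E]
  {f : ℝ → E} {x : ℝ}

theorem hasDerivAt_setIntegral_Iio (hf : Integrable f) (hx : ContinuousAt f x) :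
    HasDerivAt (fun y => ∫ t in Iio y, f t) (f x) x := by
  have hFTC := intervalIntegral.integral_hasDerivAt_right (a := x) hf.intervalIntegrable
    hf.aestronglyMeasurable.stronglyMeasurableAtFilter hx
  refine (hFTC.const_add (∫ t in Iio x, f t)).congr_of_eventuallyEq (.of_forall fun y => ?_)
  dsimp only
  rw [← intervalIntegral.integral_Iio_sub_Iio' hf.integrableOn hf.integrableOn]
  abel

theorem hasDerivAt_setIntegral_Ioi (hf : Integrable f) (hx : ContinuousAt f x) :
    HasDerivAt (fun y => ∫ t in Ioi y, f t) (-f x) x := by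
  have hFTC := intervalIntegral.integral_hasDerivAt_right (a := x) hf.intervalIntegrable
    hf.aestronglyMeasurable.stronglyMeasurableAtFilter hx
  refine (hFTC.const_sub (∫ t in Ioi x, f t)).congr_of_eventuallyEq (.of_forall fun y => ?_)
  dsimp only
  rw [← intervalIntegral.integral_Ioi_sub_Ioi' hf.integrableOn hf.integrableOn]
  abel

end SetIntegralDeriv

theorem hasDerivAt_exp_mul_add_exp_two_mul {F G : ℝ → ℝ} {r x : ℝ} (a b : ℝ)
    (hF : HasDerivAt F r x) (hG : HasDerivAt G (-(r * exp (-x))) x) :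
    HasDerivAt (fun y => a * exp y * F y + b * exp (2 * y) * G y)
      (a * exp x * F x + 2 * b * exp (2 * x) * G x + (a - b) * exp x * r) x := by
  have hexp₂ : HasDerivAt (fun y => exp (2 * y)) (exp (2 * x) * 2) x :=
    ((hasDerivAt_id x).const_mul 2).exp.congr_deriv (by simp)
  have hcancel : exp (2 * x) * exp (-x) = exp x := by rw [← exp_add]; ring_nf
  refine ((((hasDerivAt_exp x).const_mul a).mul hF).add
    ((hexp₂.const_mul b).mul hG)).congr_deriv ?_
  linear_combination (-(b * r)) * hcancel

theorem stationary_density_ode (ρ ρ' ρ'' : ℝ → ℝ)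
    (hint : Integrable ρ) (hcont : Continuous ρ)
    (hint₁ : Integrable fun δ => ρ δ * exp (-δ))
    (heq_neg : ∀ d < 0, ρ d =
      exp d * (∫ δ in Iio d, ρ δ) + exp (2 * d) * ∫ δ in Ioi d, ρ δ * exp (-δ))
    (hder : ∀ d < 0, HasDerivAt ρ (ρ' d) d)
    (hder' : ∀ d < 0, HasDerivAt ρ' (ρ'' d) d) :
    ∀ d < 0, ρ'' d = 3 * ρ' d - (2 + exp d) * ρ d := by
  set F : ℝ → ℝ := fun y => ∫ δ in Iio y, ρ δ
  set G : ℝ → ℝ := fun y => ∫ δ in Ioi y, ρ δ * exp (-δ)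
  have hF (x : ℝ) : HasDerivAt F (ρ x) x := hasDerivAt_setIntegral_Iio hint hcont.continuousAt
  have hG (x : ℝ) : HasDerivAt G (-(ρ x * exp (-x))) x :=
    hasDerivAt_setIntegral_Ioi hint₁ (by fun_prop)
  have hρ' : ∀ x < 0, ρ' x = exp x * F x + 2 * exp (2 * x) * G x := by
    intro x hx
    refine (hder x hx).unique ((hasDerivAt_exp_mul_add_exp_two_mul 1 1 (hF x) (hG x)
      |>.congr_of_eventuallyEq ?_).congr_deriv (by ring))
    filter_upwards [Iio_mem_nhds hx] with y hy
    rw [heq_neg y hy]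
    ring
  intro d hd
  have hρ'' : ρ'' d = exp d * F d + 4 * exp (2 * d) * G d - exp d * ρ d := by
    refine (hder' d hd).unique ((hasDerivAt_exp_mul_add_exp_two_mul 1 2 (hF d) (hG d)
      |>.congr_of_eventuallyEq ?_).congr_deriv (by ring))
    filter_upwards [Iio_mem_nhds hd] with y hy
    rw [hρ' y hy]
    ring
  rw [hρ'', hρ' d hd, heq_neg d hd]
  ring
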